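/- arXiv:2603.22303 — 2 statements merged into one kernel-verified Lean document; each statement's English description precedes it below -/
import Mathlib

section
/- Let d ≥ 1, K ≥ 2, and for each i = 1,…,K let m_i ≥ 1 and let Z_i = (z_{i,1},…,z_{i,m_i}) and Z'_i = (z'_{i,1},…,z'_{i,m_i}) be tuples of points in ℝ^d of the same length m_i. Define the per-sample perturbation magnitudes ε_i = ‖Z_i − Z'_i‖_F / √(m_i). Then |AvgWD(Z_1,…,Z_K) − AvgWD(Z'_1,…,Z'_K)| ≤ (2/K) · Σ_{i=1}^K ε_i. -/
/-- A coupling between uniform weight vectors of sizes `m` and `m'`: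
a nonnegative matrix whose row sums all equal `1/m` and column sums all equal `1/m'`. -/
def IsCoupling {m m' : ℕ} (P : Matrix (Fin m) (Fin m') ℝ) : Prop :=
  (∀ t s, 0 ≤ P t s) ∧ (∀ t, ∑ s, P t s = 1 / (m : ℝ)) ∧ (∀ s, ∑ t, P t s = 1 / (m' : ℝ))

/-- Discrete 2-Wasserstein distance between finite tuples of points in ℝ^d. -/
noncomputable def W2 {d m m' : ℕ}
    (Z : Fin m → EuclideanSpace ℝ (Fin d)) (Z' : Fin m' → EuclideanSpace ℝ (Fin d)) : ℝ :=
  Real.sqrt (⨅ P : {P : Matrix (Fin m) (Fin m') ℝ // IsCoupling P},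
    ∑ t, ∑ s, P.1 t s * ‖Z t - Z' s‖ ^ 2)

/-- Frobenius norm of the difference of two equal-length tuples. -/
noncomputable def frobDiff {d m : ℕ}
    (Z Z' : Fin m → EuclideanSpace ℝ (Fin d)) : ℝ :=
  Real.sqrt (∑ t, ‖Z t - Z' t‖ ^ 2)

/-- Average pairwise 2-Wasserstein distance among `K` tuples. -/
noncomputable def AvgWD {d K : ℕ} {m : Fin K → ℕ}
    (Z : ∀ i, Fin (m i) → EuclideanSpace ℝ (Fin d)) : ℝ :=
  (2 / ((K : ℝ) * ((K : ℝ) - 1))) *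
    ∑ i : Fin K, ∑ j ∈ Finset.univ.filter (fun j => i < j), W2 (Z i) (Z j)

namespace AWD

noncomputable def cost {d m m' : ℕ} (Z : Fin m → EuclideanSpace ℝ (Fin d))
    (Z' : Fin m' → EuclideanSpace ℝ (Fin d)) (P : Matrix (Fin m) (Fin m') ℝ) : ℝ :=
  ∑ t, ∑ s, P t s * ‖Z t - Z' s‖ ^ 2

lemma w2_eq {d m m' : ℕ} (Z : Fin m → EuclideanSpace ℝ (Fin d))
    (Z' : Fin m' → EuclideanSpace ℝ (Fin d)) :
    W2 Z Z' = Real.sqrt (⨅ P : {P : Matrix (Fin m) (Fin m') ℝ // IsCoupling P}, cost Z Z' P.1) :=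
  rfl

lemma coupling_nonempty {m m' : ℕ} (hm : m ≠ 0) (hm' : m' ≠ 0) :
    Nonempty {P : Matrix (Fin m) (Fin m') ℝ // IsCoupling P} := by
  refine ⟨⟨Matrix.of fun _ _ => 1 / ((m : ℝ) * m'), ?_, ?_, ?_⟩⟩
  · intro t s
    show (0:ℝ) ≤ 1 / ((m : ℝ) * m')
    have h1 : (0:ℝ) < m := by exact_mod_cast Nat.pos_of_ne_zero hm
    have h2 : (0:ℝ) < m' := by exact_mod_cast Nat.pos_of_ne_zero hm'
    positivity
  · intro t
    simp [Finset.sum_const]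
    field_simp
  · intro s
    simp [Finset.sum_const]
    field_simp

lemma cost_nonneg {d m m' : ℕ} (Z : Fin m → EuclideanSpace ℝ (Fin d))
    (Z' : Fin m' → EuclideanSpace ℝ (Fin d)) {P : Matrix (Fin m) (Fin m') ℝ}
    (hP : IsCoupling P) : 0 ≤ cost Z Z' P := by
  apply Finset.sum_nonneg; intro t _; apply Finset.sum_nonneg; intro s _
  exact mul_nonneg (hP.1 t s) (by positivity)

lemma cost_bddBelow {d m m' : ℕ} (Z : Fin m → EuclideanSpace ℝ (Fin d))
    (Z' : Fin m' → EuclideanSpace ℝ (Fin d)) :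
    BddBelow (Set.range fun P : {P : Matrix (Fin m) (Fin m') ℝ // IsCoupling P} => cost Z Z' P.1) := by
  refine ⟨0, ?_⟩
  rintro x ⟨P, rfl⟩
  exact cost_nonneg Z Z' P.2

lemma w2_le_sqrt_cost {d m m' : ℕ} (Z : Fin m → EuclideanSpace ℝ (Fin d))
    (Z' : Fin m' → EuclideanSpace ℝ (Fin d)) (P : {P : Matrix (Fin m) (Fin m') ℝ // IsCoupling P}) :
    W2 Z Z' ≤ Real.sqrt (cost Z Z' P.1) := by
  rw [w2_eq]
  exact Real.sqrt_le_sqrt (ciInf_le (cost_bddBelow Z Z') P)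

lemma le_w2 {d m m' : ℕ} {Z : Fin m → EuclideanSpace ℝ (Fin d)}
    {Z' : Fin m' → EuclideanSpace ℝ (Fin d)} {c : ℝ}
    (hne : Nonempty {P : Matrix (Fin m) (Fin m') ℝ // IsCoupling P})
    (h : ∀ P : {P : Matrix (Fin m) (Fin m') ℝ // IsCoupling P}, c ≤ Real.sqrt (cost Z Z' P.1)) :
    c ≤ W2 Z Z' := by
  rcases le_or_gt c 0 with hc | hc
  · exact hc.trans (Real.sqrt_nonneg _)
  · rw [w2_eq, Real.le_sqrt hc.le (le_ciInf fun P => cost_nonneg Z Z' P.2)]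
    apply le_ciInf
    intro P
    have := h P
    rw [Real.le_sqrt hc.le (cost_nonneg Z Z' P.2)] at this
    exact this

lemma w2_nonneg {d m m' : ℕ} (Z : Fin m → EuclideanSpace ℝ (Fin d))
    (Z' : Fin m' → EuclideanSpace ℝ (Fin d)) : 0 ≤ W2 Z Z' := Real.sqrt_nonneg _

lemma isCoupling_transpose {m m' : ℕ} {P : Matrix (Fin m) (Fin m') ℝ} (hP : IsCoupling P) :
    IsCoupling P.transpose :=
  ⟨fun t s => hP.1 s t, hP.2.2, hP.2.1⟩

lemma w2_symm {d m m' : ℕ} (Z : Fin m → EuclideanSpace ℝ (Fin d))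
    (Z' : Fin m' → EuclideanSpace ℝ (Fin d)) : W2 Z Z' = W2 Z' Z := by
  rw [w2_eq, w2_eq]
  congr 1
  rw [iInf, iInf]
  congr 1
  ext x
  constructor
  · rintro ⟨⟨P, hP⟩, rfl⟩
    refine ⟨⟨P.transpose, isCoupling_transpose hP⟩, ?_⟩
    simp only [cost, Matrix.transpose_apply]
    rw [Finset.sum_comm]
    simp [norm_sub_rev]
  · rintro ⟨⟨P, hP⟩, rfl⟩
    refine ⟨⟨P.transpose, isCoupling_transpose hP⟩, ?_⟩
    simp only [cost, Matrix.transpose_apply]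
    rw [Finset.sum_comm]
    simp [norm_sub_rev]

end AWD

namespace AWD

lemma isCoupling_glue {m m' m'' : ℕ} (hm' : m' ≠ 0)
    {P : Matrix (Fin m) (Fin m') ℝ} {Q : Matrix (Fin m') (Fin m'') ℝ}
    (hP : IsCoupling P) (hQ : IsCoupling Q) :
    IsCoupling (Matrix.of fun t u => ∑ s, (m' : ℝ) * (P t s * Q s u)) := by
  have hm'0 : (m' : ℝ) ≠ 0 := Nat.cast_ne_zero.2 hm'
  refine ⟨?_, ?_, ?_⟩
  · intro t u
    simp only [Matrix.of_apply]
    apply Finset.sum_nonneg; intro s _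
    exact mul_nonneg (Nat.cast_nonneg _) (mul_nonneg (hP.1 t s) (hQ.1 s u))
  · intro t
    simp only [Matrix.of_apply]
    rw [Finset.sum_comm]
    have : ∀ s, ∑ u, (m':ℝ) * (P t s * Q s u) = P t s := by
      intro s
      rw [← Finset.mul_sum, ← Finset.mul_sum, hQ.2.1 s]
      field_simp
    simp only [this]
    exact hP.2.1 t
  · intro u
    simp only [Matrix.of_apply]
    rw [Finset.sum_comm]
    have : ∀ s, ∑ t, (m':ℝ) * (P t s * Q s u) = Q s u := by
      intro s
      have : ∑ t, (m':ℝ) * (P t s * Q s u) = (m':ℝ) * ((∑ t, P t s) * Q s u) := by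
        rw [Finset.sum_mul, ← Finset.mul_sum]
      rw [this, hP.2.2 s]
      field_simp
    simp only [this]
    exact hQ.2.2 u

lemma sqrt_cost_glue_le {d m m' m'' : ℕ} (hm' : m' ≠ 0)
    (A : Fin m → EuclideanSpace ℝ (Fin d)) (B : Fin m' → EuclideanSpace ℝ (Fin d))
    (C : Fin m'' → EuclideanSpace ℝ (Fin d))
    {P : Matrix (Fin m) (Fin m') ℝ} {Q : Matrix (Fin m') (Fin m'') ℝ}
    (hP : IsCoupling P) (hQ : IsCoupling Q) :
    Real.sqrt (cost A C (Matrix.of fun t u => ∑ s, (m' : ℝ) * (P t s * Q s u)))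
      ≤ Real.sqrt (cost A B P) + Real.sqrt (cost B C Q) := by
  have hm'0 : (m' : ℝ) ≠ 0 := Nat.cast_ne_zero.2 hm'
  set ι := Fin m × Fin m' × Fin m'' with hι
  set w : ι → ℝ := fun p => (m' : ℝ) * (P p.1 p.2.1 * Q p.2.1 p.2.2) with hw
  have hw0 : ∀ p, 0 ≤ w p := fun p =>
    mul_nonneg (Nat.cast_nonneg _) (mul_nonneg (hP.1 _ _) (hQ.1 _ _))
  set F : EuclideanSpace ℝ ι := WithLp.toLp 2 fun p => Real.sqrt (w p) * ‖A p.1 - B p.2.1‖ with hF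
  set G : EuclideanSpace ℝ ι := WithLp.toLp 2 fun p => Real.sqrt (w p) * ‖B p.2.1 - C p.2.2‖ with hG
  have normsq : ∀ H : EuclideanSpace ℝ ι, ‖H‖ ^ 2 = ∑ p, (H p) ^ 2 := by
    intro H
    rw [EuclideanSpace.norm_eq]
    rw [Real.sq_sqrt (by positivity)]
    simp [sq_abs]
  have sum3 : ∀ f : ι → ℝ, ∑ p : ι, f p = ∑ t, ∑ s, ∑ u, f (t, s, u) := by
    intro f
    rw [Fintype.sum_prod_type]
    simp [Fintype.sum_prod_type]
  have hFc : ‖F‖ ^ 2 = cost A B P := by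
    rw [normsq, sum3]
    unfold cost
    congr 1; ext t; congr 1; ext s
    have : ∀ u : Fin m'', (F (t, s, u)) ^ 2 = w (t, s, u) * ‖A t - B s‖ ^ 2 := by
      intro u
      rw [hF]
      rw [mul_pow, Real.sq_sqrt (hw0 _)]
    simp only [this, hw]
    rw [← Finset.sum_mul, ← Finset.mul_sum, ← Finset.mul_sum, hQ.2.1 s]
    field_simp
  have hGc : ‖G‖ ^ 2 = cost B C Q := by
    rw [normsq, sum3, Finset.sum_comm]
    unfold cost
    congr 1; ext s
    have : ∀ t u, (G (t, s, u)) ^ 2 = w (t, s, u) * ‖B s - C u‖ ^ 2 := by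
      intro t u
      rw [hG, mul_pow, Real.sq_sqrt (hw0 _)]
    simp only [this, hw]
    rw [Finset.sum_comm]
    congr 1; ext u
    have : ∀ t, (m':ℝ) * (P t s * Q s u) * ‖B s - C u‖ ^ 2
        = ((m':ℝ) * Q s u * ‖B s - C u‖ ^ 2) * P t s := by intro t; ring
    simp only [this]
    rw [← Finset.mul_sum]
    rw [hP.2.2 s]
    field_simp
  have hS : cost A C (Matrix.of fun t u => ∑ s, (m' : ℝ) * (P t s * Q s u)) ≤ ‖F + G‖ ^ 2 := by
    rw [normsq]
    have hc : cost A C (Matrix.of fun t u => ∑ s, (m' : ℝ) * (P t s * Q s u))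
        = ∑ p : ι, w p * ‖A p.1 - C p.2.2‖ ^ 2 := by
      rw [sum3]
      unfold cost
      congr 1; ext t
      rw [Finset.sum_comm]
      congr 1; ext u
      simp only [Matrix.of_apply, Finset.sum_mul, hw]
    rw [hc]
    apply Finset.sum_le_sum
    intro p _
    have hpt : (F + G) p = F p + G p := rfl
    rw [hpt, hF, hG]
    have htri : ‖A p.1 - C p.2.2‖ ≤ ‖A p.1 - B p.2.1‖ + ‖B p.2.1 - C p.2.2‖ :=
      norm_sub_le_norm_sub_add_norm_sub _ _ _
    calc w p * ‖A p.1 - C p.2.2‖ ^ 2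
        ≤ w p * (‖A p.1 - B p.2.1‖ + ‖B p.2.1 - C p.2.2‖) ^ 2 := by
          apply mul_le_mul_of_nonneg_left _ (hw0 p)
          exact pow_le_pow_left₀ (norm_nonneg _) htri 2
      _ = (Real.sqrt (w p) * ‖A p.1 - B p.2.1‖ + Real.sqrt (w p) * ‖B p.2.1 - C p.2.2‖) ^ 2 := by
          rw [← mul_add, mul_pow, Real.sq_sqrt (hw0 p)]
  calc Real.sqrt (cost A C (Matrix.of fun t u => ∑ s, (m' : ℝ) * (P t s * Q s u)))
      ≤ Real.sqrt (‖F + G‖ ^ 2) := Real.sqrt_le_sqrt hS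
    _ = ‖F + G‖ := Real.sqrt_sq (norm_nonneg _)
    _ ≤ ‖F‖ + ‖G‖ := norm_add_le _ _
    _ = Real.sqrt (cost A B P) + Real.sqrt (cost B C Q) := by
        rw [← Real.sqrt_sq (norm_nonneg F), ← Real.sqrt_sq (norm_nonneg G), hFc, hGc]

lemma w2_triangle {d m m' m'' : ℕ} (hm : m ≠ 0) (hm' : m' ≠ 0) (hm'' : m'' ≠ 0)
    (A : Fin m → EuclideanSpace ℝ (Fin d)) (B : Fin m' → EuclideanSpace ℝ (Fin d))
    (C : Fin m'' → EuclideanSpace ℝ (Fin d)) :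
    W2 A C ≤ W2 A B + W2 B C := by
  haveI := coupling_nonempty hm hm'
  haveI := coupling_nonempty hm' hm''
  haveI := coupling_nonempty hm hm''
  have key : ∀ (P : {P : Matrix (Fin m) (Fin m') ℝ // IsCoupling P})
      (Q : {Q : Matrix (Fin m') (Fin m'') ℝ // IsCoupling Q}),
      W2 A C ≤ Real.sqrt (cost A B P.1) + Real.sqrt (cost B C Q.1) := by
    intro P Q
    calc W2 A C ≤ Real.sqrt (cost A C (Matrix.of fun t u => ∑ s, (m' : ℝ) * (P.1 t s * Q.1 s u))) :=
          w2_le_sqrt_cost A C ⟨_, isCoupling_glue hm' P.2 Q.2⟩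
      _ ≤ _ := sqrt_cost_glue_le hm' A B C P.2 Q.2
  have h1 : W2 A C - W2 B C ≤ W2 A B := by
    rw [w2_eq A B]
    rcases le_or_gt (W2 A C - W2 B C) 0 with hc | hc
    · exact hc.trans (Real.sqrt_nonneg _)
    · rw [Real.le_sqrt hc.le (le_ciInf fun P => cost_nonneg A B P.2)]
      apply le_ciInf
      intro P
      have h2 : W2 A C - Real.sqrt (cost A B P.1) ≤ W2 B C := by
        rw [w2_eq B C]
        rcases le_or_gt (W2 A C - Real.sqrt (cost A B P.1)) 0 with hc2 | hc2
        · exact hc2.trans (Real.sqrt_nonneg _)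
        · rw [Real.le_sqrt hc2.le (le_ciInf fun Q => cost_nonneg B C Q.2)]
          apply le_ciInf
          intro Q
          have := key P Q
          have h3 : W2 A C - Real.sqrt (cost A B P.1) ≤ Real.sqrt (cost B C Q.1) := by linarith
          rw [Real.le_sqrt hc2.le (cost_nonneg B C Q.2)] at h3
          exact h3
      have h4 : W2 A C - W2 B C ≤ Real.sqrt (cost A B P.1) := by linarith
      rw [Real.le_sqrt hc.le (cost_nonneg A B P.2)] at h4
      exact h4
  linarith

end AWD

namespace AWD

lemma w2_le_frob {d m : ℕ} (hm : m ≠ 0) (Z Z' : Fin m → EuclideanSpace ℝ (Fin d)) :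
    W2 Z Z' ≤ frobDiff Z Z' / Real.sqrt m := by
  have hm0 : (0:ℝ) < m := by exact_mod_cast Nat.pos_of_ne_zero hm
  have hcoup : IsCoupling (Matrix.of fun t s : Fin m => if t = s then 1/(m:ℝ) else 0) := by
    refine ⟨?_, ?_, ?_⟩
    · intro t s
      simp only [Matrix.of_apply]
      split <;> positivity
    · intro t
      simp [Finset.sum_ite_eq]
    · intro s
      simp [Finset.sum_ite_eq']
  have hc : cost Z Z' (Matrix.of fun t s : Fin m => if t = s then 1/(m:ℝ) else 0)
      = (1/(m:ℝ)) * ∑ t, ‖Z t - Z' t‖ ^ 2 := by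
    unfold cost
    rw [Finset.mul_sum]
    congr 1; ext t
    simp [Finset.sum_ite_eq, ite_mul]
  calc W2 Z Z' ≤ Real.sqrt (cost Z Z' (Matrix.of fun t s : Fin m => if t = s then 1/(m:ℝ) else 0)) :=
        w2_le_sqrt_cost Z Z' ⟨_, hcoup⟩
    _ = frobDiff Z Z' / Real.sqrt m := by
        rw [hc, Real.sqrt_mul (by positivity), frobDiff]
        rw [one_div, Real.sqrt_inv]
        ring

lemma frob_div_nonneg {d m : ℕ} (Z Z' : Fin m → EuclideanSpace ℝ (Fin d)) :
    0 ≤ frobDiff Z Z' / Real.sqrt m :=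
  div_nonneg (Real.sqrt_nonneg _) (Real.sqrt_nonneg _)

lemma w2_diff_le {d mi mj : ℕ} (hi : mi ≠ 0) (hj : mj ≠ 0)
    (A A' : Fin mi → EuclideanSpace ℝ (Fin d)) (B B' : Fin mj → EuclideanSpace ℝ (Fin d)) :
    |W2 A B - W2 A' B'| ≤ W2 A A' + W2 B B' := by
  rw [abs_sub_le_iff]
  constructor
  · have t1 := w2_triangle hi hi hj A A' B
    have t2 := w2_triangle hi hj hj A' B' B
    rw [w2_symm B' B] at t2
    linarith
  · have t1 := w2_triangle hi hi hj A' A B'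
    have t2 := w2_triangle hi hj hj A B B'
    rw [w2_symm A' A] at t1
    linarith

lemma counting {K : ℕ} (hK : 1 ≤ K) (f : Fin K → ℝ) :
    ∑ i : Fin K, ∑ j ∈ Finset.univ.filter (fun j => i < j), (f i + f j)
      = ((K : ℝ) - 1) * ∑ i, f i := by
  have hfil : ∀ i : Fin K, Finset.univ.filter (fun j => i < j) = Finset.Ioi i := by
    intro i; ext j; simp
  have hfil' : ∀ j : Fin K, Finset.univ.filter (fun i => i < j) = Finset.Iio j := by
    intro j; ext i; simp
  have h1 : ∑ i : Fin K, ∑ _j ∈ Finset.univ.filter (fun j => i < j), f i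
      = ∑ i : Fin K, ((Finset.Ioi i).card : ℝ) * f i := by
    simp_rw [Finset.sum_const, nsmul_eq_mul, hfil]
  have h2 : ∑ i : Fin K, ∑ j ∈ Finset.univ.filter (fun j => i < j), f j
      = ∑ j : Fin K, ((Finset.Iio j).card : ℝ) * f j := by
    simp_rw [Finset.sum_filter]
    rw [Finset.sum_comm]
    simp_rw [← Finset.sum_filter, hfil', Finset.sum_const, nsmul_eq_mul]
  have key : ∀ i : Fin K, ((Finset.Ioi i).card : ℝ) + ((Finset.Iio i).card : ℝ) = (K : ℝ) - 1 := by
    intro i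
    rw [Fin.card_Ioi, Fin.card_Iio]
    have hn : (K - 1 - (i : ℕ)) + (i : ℕ) = K - 1 := by omega
    rw [← Nat.cast_add, hn, Nat.cast_sub hK, Nat.cast_one]
  calc ∑ i : Fin K, ∑ j ∈ Finset.univ.filter (fun j => i < j), (f i + f j)
      = (∑ i : Fin K, ∑ _j ∈ Finset.univ.filter (fun j => i < j), f i)
        + ∑ i : Fin K, ∑ j ∈ Finset.univ.filter (fun j => i < j), f j := by
        rw [← Finset.sum_add_distrib]
        congr 1; ext i
        rw [← Finset.sum_add_distrib]
    _ = ∑ i : Fin K, (((Finset.Ioi i).card : ℝ) + ((Finset.Iio i).card : ℝ)) * f i := by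
        rw [h1, h2, ← Finset.sum_add_distrib]
        congr 1; ext i
        ring
    _ = ((K : ℝ) - 1) * ∑ i, f i := by
        simp_rw [key]
        rw [← Finset.mul_sum]

end AWD



/-- AvgWD is Lipschitz under token-level perturbations. -/
theorem avgWD_lipschitz (d K : ℕ) (hd : 1 ≤ d) (hK : 2 ≤ K)
    (m : Fin K → ℕ) (hm : ∀ i, 1 ≤ m i)
    (Z Z' : ∀ i, Fin (m i) → EuclideanSpace ℝ (Fin d)) :
    |AvgWD Z - AvgWD Z'| ≤
      (2 / (K : ℝ)) * ∑ i, frobDiff (Z i) (Z' i) / Real.sqrt (m i) := by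
  set ε : Fin K → ℝ := fun i => frobDiff (Z i) (Z' i) / Real.sqrt (m i) with hε
  have hεnn : ∀ i, 0 ≤ ε i := fun i => AWD.frob_div_nonneg _ _
  have hK2 : (2:ℝ) ≤ (K:ℝ) := by exact_mod_cast hK
  have hmne : ∀ i, m i ≠ 0 := fun i => Nat.one_le_iff_ne_zero.1 (hm i)
  have hpair : ∀ i j : Fin K, |W2 (Z i) (Z j) - W2 (Z' i) (Z' j)| ≤ ε i + ε j := by
    intro i j
    calc |W2 (Z i) (Z j) - W2 (Z' i) (Z' j)|
        ≤ W2 (Z i) (Z' i) + W2 (Z j) (Z' j) :=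
          AWD.w2_diff_le (hmne i) (hmne j) (Z i) (Z' i) (Z j) (Z' j)
      _ ≤ ε i + ε j :=
          add_le_add (AWD.w2_le_frob (hmne i) _ _) (AWD.w2_le_frob (hmne j) _ _)
  have habs : |(∑ i : Fin K, ∑ j ∈ Finset.univ.filter (fun j => i < j), W2 (Z i) (Z j))
      - ∑ i : Fin K, ∑ j ∈ Finset.univ.filter (fun j => i < j), W2 (Z' i) (Z' j)|
      ≤ ((K:ℝ) - 1) * ∑ i, ε i := by
    have hsub : (∑ i : Fin K, ∑ j ∈ Finset.univ.filter (fun j => i < j), W2 (Z i) (Z j))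
        - ∑ i : Fin K, ∑ j ∈ Finset.univ.filter (fun j => i < j), W2 (Z' i) (Z' j)
        = ∑ i : Fin K, ∑ j ∈ Finset.univ.filter (fun j => i < j),
            (W2 (Z i) (Z j) - W2 (Z' i) (Z' j)) := by
      rw [← Finset.sum_sub_distrib]
      congr 1; ext i
      rw [← Finset.sum_sub_distrib]
    rw [hsub]
    calc |∑ i : Fin K, ∑ j ∈ Finset.univ.filter (fun j => i < j),
            (W2 (Z i) (Z j) - W2 (Z' i) (Z' j))|
        ≤ ∑ i : Fin K, |∑ j ∈ Finset.univ.filter (fun j => i < j),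
            (W2 (Z i) (Z j) - W2 (Z' i) (Z' j))| := Finset.abs_sum_le_sum_abs _ _
      _ ≤ ∑ i : Fin K, ∑ j ∈ Finset.univ.filter (fun j => i < j),
            |W2 (Z i) (Z j) - W2 (Z' i) (Z' j)| :=
          Finset.sum_le_sum fun i _ => Finset.abs_sum_le_sum_abs _ _
      _ ≤ ∑ i : Fin K, ∑ j ∈ Finset.univ.filter (fun j => i < j), (ε i + ε j) :=
          Finset.sum_le_sum fun i _ => Finset.sum_le_sum fun j _ => hpair i j
      _ = ((K:ℝ) - 1) * ∑ i, ε i := AWD.counting (by omega) ε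
  have hcnn : (0:ℝ) ≤ 2 / ((K:ℝ) * ((K:ℝ) - 1)) := by
    apply div_nonneg (by norm_num)
    apply mul_nonneg <;> linarith
  unfold AvgWD
  rw [← mul_sub, abs_mul, abs_of_nonneg hcnn]
  calc (2 / ((K:ℝ) * ((K:ℝ) - 1))) * |(∑ i : Fin K, ∑ j ∈ Finset.univ.filter (fun j => i < j), W2 (Z i) (Z j))
        - ∑ i : Fin K, ∑ j ∈ Finset.univ.filter (fun j => i < j), W2 (Z' i) (Z' j)|
      ≤ (2 / ((K:ℝ) * ((K:ℝ) - 1))) * (((K:ℝ) - 1) * ∑ i, ε i) :=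
        mul_le_mul_of_nonneg_left habs hcnn
    _ = (2 / (K : ℝ)) * ∑ i, ε i := by
        have h1 : (K:ℝ) ≠ 0 := by linarith
        have h2 : (K:ℝ) - 1 ≠ 0 := by linarith
        field_simp
end

section
/- Let d ≥ 1, K ≥ 2, and for each i = 1,…,K let m_i ≥ 1 and let Z_i and Z'_i be tuples of points in ℝ^d of the same length m_i. Suppose there is ε ≥ 0 such that ‖Z_i − Z'_i‖_F / √(m_i) ≤ ε for all i. Then |AvgWD(Z_1,…,Z_K) − AvgWD(Z'_1,…,Z'_K)| ≤ 2ε. -/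
lemma mink {ι : Type*} (s : Finset ι) (f g : ι → ℝ) :
    Real.sqrt (∑ i ∈ s, (f i + g i) ^ 2) ≤
      Real.sqrt (∑ i ∈ s, f i ^ 2) + Real.sqrt (∑ i ∈ s, g i ^ 2) := by
  have hA : (0:ℝ) ≤ ∑ i ∈ s, f i ^ 2 := by positivity
  have hB : (0:ℝ) ≤ ∑ i ∈ s, g i ^ 2 := by positivity
  have cs := Real.sum_mul_le_sqrt_mul_sqrt s f g
  have expand : ∑ i ∈ s, (f i + g i) ^ 2
      = (∑ i ∈ s, f i ^ 2) + 2 * (∑ i ∈ s, f i * g i) + (∑ i ∈ s, g i ^ 2) := by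
    rw [Finset.mul_sum, ← Finset.sum_add_distrib, ← Finset.sum_add_distrib]
    exact Finset.sum_congr rfl fun i _ => by ring
  have h1 : Real.sqrt (∑ i ∈ s, f i ^ 2) ^ 2 = ∑ i ∈ s, f i ^ 2 := Real.sq_sqrt hA
  have h2 : Real.sqrt (∑ i ∈ s, g i ^ 2) ^ 2 = ∑ i ∈ s, g i ^ 2 := Real.sq_sqrt hB
  have key : ∑ i ∈ s, (f i + g i) ^ 2
      ≤ (Real.sqrt (∑ i ∈ s, f i ^ 2) + Real.sqrt (∑ i ∈ s, g i ^ 2)) ^ 2 := by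
    nlinarith [Real.sqrt_nonneg (∑ i ∈ s, f i ^ 2), Real.sqrt_nonneg (∑ i ∈ s, g i ^ 2)]
  calc Real.sqrt (∑ i ∈ s, (f i + g i) ^ 2)
      ≤ Real.sqrt ((Real.sqrt (∑ i ∈ s, f i ^ 2) + Real.sqrt (∑ i ∈ s, g i ^ 2)) ^ 2) :=
        Real.sqrt_le_sqrt key
    _ = _ := Real.sqrt_sq (by positivity)

lemma W2_perturb_le {d m m' : ℕ} (hm : 1 ≤ m) (hm' : 1 ≤ m')
    (A A' : Fin m → EuclideanSpace ℝ (Fin d)) (B B' : Fin m' → EuclideanSpace ℝ (Fin d))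
    (ε : ℝ)
    (hA : frobDiff A A' / Real.sqrt m ≤ ε) (hB : frobDiff B B' / Real.sqrt m' ≤ ε) :
    W2 A B ≤ W2 A' B' + 2 * ε := by
  have hm0 : (0:ℝ) < m := by exact_mod_cast hm
  have hm'0 : (0:ℝ) < m' := by exact_mod_cast hm'
  have hne : Nonempty {P : Matrix (Fin m) (Fin m') ℝ // IsCoupling P} := by
    refine ⟨⟨fun _ _ => 1 / (m * m' : ℝ), fun t s => by positivity, fun t => ?_, fun s => ?_⟩⟩
    · rw [Finset.sum_const, Finset.card_univ, Fintype.card_fin, nsmul_eq_mul]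
      field_simp
      try ring
    · rw [Finset.sum_const, Finset.card_univ, Fintype.card_fin, nsmul_eq_mul]
      field_simp
      try ring
  set g : {P : Matrix (Fin m) (Fin m') ℝ // IsCoupling P} → ℝ :=
    fun P => ∑ t, ∑ s, P.1 t s * ‖A t - B s‖ ^ 2 with hgdef
  set g' : {P : Matrix (Fin m) (Fin m') ℝ // IsCoupling P} → ℝ :=
    fun P => ∑ t, ∑ s, P.1 t s * ‖A' t - B' s‖ ^ 2 with hg'def
  have gnn : ∀ P, 0 ≤ g P := fun P =>
    Finset.sum_nonneg fun t _ => Finset.sum_nonneg fun s _ =>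
      mul_nonneg (P.2.1 t s) (by positivity)
  have g'nn : ∀ P, 0 ≤ g' P := fun P =>
    Finset.sum_nonneg fun t _ => Finset.sum_nonneg fun s _ =>
      mul_nonneg (P.2.1 t s) (by positivity)
  have bdd : BddBelow (Set.range g) := ⟨0, by rintro _ ⟨P, rfl⟩; exact gnn P⟩
  have bdd' : BddBelow (Set.range g') := ⟨0, by rintro _ ⟨P, rfl⟩; exact g'nn P⟩
  -- pointwise bound
  have point : ∀ P, Real.sqrt (g P) ≤ Real.sqrt (g' P) + 2 * ε := by
    intro P
    obtain ⟨hPnn, hrow, hcol⟩ := P.2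
    set x : Fin m × Fin m' → ℝ := fun p => Real.sqrt (P.1 p.1 p.2) * ‖A' p.1 - B' p.2‖ with hx
    set y : Fin m × Fin m' → ℝ := fun p => Real.sqrt (P.1 p.1 p.2) * ‖A p.1 - A' p.1‖ with hy
    set z : Fin m × Fin m' → ℝ := fun p => Real.sqrt (P.1 p.1 p.2) * ‖B p.2 - B' p.2‖ with hz
    have hw : ∀ p : Fin m × Fin m', Real.sqrt (P.1 p.1 p.2) ^ 2 = P.1 p.1 p.2 :=
      fun p => Real.sq_sqrt (hPnn p.1 p.2)
    have step1 : Real.sqrt (g P) ≤ Real.sqrt (∑ p : Fin m × Fin m', (x p + (y p + z p)) ^ 2) := by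
      apply Real.sqrt_le_sqrt
      rw [hgdef]
      simp only
      rw [Fintype.sum_prod_type]
      apply Finset.sum_le_sum; intro t _
      apply Finset.sum_le_sum; intro s _
      set p : Fin m × Fin m' := (t, s) with hp
      have tri : ‖A p.1 - B p.2‖ ≤ ‖A' p.1 - B' p.2‖ + (‖A p.1 - A' p.1‖ + ‖B p.2 - B' p.2‖) := by
        have : A p.1 - B p.2 = (A p.1 - A' p.1) + ((A' p.1 - B' p.2) + (B' p.2 - B p.2)) := by abel
        rw [this]
        calc ‖(A p.1 - A' p.1) + ((A' p.1 - B' p.2) + (B' p.2 - B p.2))‖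
            ≤ ‖A p.1 - A' p.1‖ + (‖A' p.1 - B' p.2‖ + ‖B' p.2 - B p.2‖) :=
              (norm_add_le _ _).trans (by gcongr; exact norm_add_le _ _)
          _ = _ := by rw [norm_sub_rev (B' p.2)]; ring
      have sq_tri : ‖A p.1 - B p.2‖ ^ 2
          ≤ (‖A' p.1 - B' p.2‖ + (‖A p.1 - A' p.1‖ + ‖B p.2 - B' p.2‖)) ^ 2 :=
        pow_le_pow_left₀ (norm_nonneg _) tri 2
      have : (x p + (y p + z p)) ^ 2
          = P.1 p.1 p.2 * (‖A' p.1 - B' p.2‖ + (‖A p.1 - A' p.1‖ + ‖B p.2 - B' p.2‖)) ^ 2 := by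
        rw [hx, hy, hz]; simp only
        rw [← mul_add, ← mul_add, mul_pow, Real.sq_sqrt (hPnn t s)]
      rw [this]
      exact mul_le_mul_of_nonneg_left sq_tri (hPnn p.1 p.2)
    have sumx : ∑ p : Fin m × Fin m', x p ^ 2 = g' P := by
      rw [hg'def]; simp only
      rw [Fintype.sum_prod_type]
      exact Finset.sum_congr rfl fun t _ => Finset.sum_congr rfl fun s _ => by
        rw [hx]; simp only [mul_pow]; rw [Real.sq_sqrt (hPnn t s)]
    have sumy : ∑ p : Fin m × Fin m', y p ^ 2 = (∑ t, ‖A t - A' t‖ ^ 2) / m := by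
      rw [Fintype.sum_prod_type]
      have : ∀ t : Fin m, ∑ s : Fin m', y (t, s) ^ 2 = ‖A t - A' t‖ ^ 2 * (1 / (m:ℝ)) := by
        intro t
        rw [← hrow t, Finset.mul_sum]
        exact Finset.sum_congr rfl fun s _ => by rw [hy]; simp only [mul_pow]; rw [Real.sq_sqrt (hPnn t s)]; ring
      rw [Finset.sum_congr rfl fun t _ => this t]
      rw [← Finset.sum_mul]
      ring
    have sumz : ∑ p : Fin m × Fin m', z p ^ 2 = (∑ s, ‖B s - B' s‖ ^ 2) / m' := by
      rw [Fintype.sum_prod_type, Finset.sum_comm]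
      have : ∀ s : Fin m', ∑ t : Fin m, z (t, s) ^ 2 = ‖B s - B' s‖ ^ 2 * (1 / (m':ℝ)) := by
        intro s
        rw [← hcol s, Finset.mul_sum]
        exact Finset.sum_congr rfl fun t _ => by rw [hz]; simp only [mul_pow]; rw [Real.sq_sqrt (hPnn t s)]; ring
      rw [Finset.sum_congr rfl fun s _ => this s]
      rw [← Finset.sum_mul]
      ring
    have hys : Real.sqrt (∑ p : Fin m × Fin m', y p ^ 2) ≤ ε := by
      rw [sumy, Real.sqrt_div (by positivity)]
      calc Real.sqrt (∑ t, ‖A t - A' t‖ ^ 2) / Real.sqrt m = frobDiff A A' / Real.sqrt m := rfl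
        _ ≤ ε := hA
    have hzs : Real.sqrt (∑ p : Fin m × Fin m', z p ^ 2) ≤ ε := by
      rw [sumz, Real.sqrt_div (by positivity)]
      exact hB
    calc Real.sqrt (g P)
        ≤ Real.sqrt (∑ p : Fin m × Fin m', (x p + (y p + z p)) ^ 2) := step1
      _ ≤ Real.sqrt (∑ p : Fin m × Fin m', x p ^ 2)
            + Real.sqrt (∑ p : Fin m × Fin m', (y p + z p) ^ 2) := mink _ _ _
      _ ≤ Real.sqrt (∑ p : Fin m × Fin m', x p ^ 2)
            + (Real.sqrt (∑ p : Fin m × Fin m', y p ^ 2)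
               + Real.sqrt (∑ p : Fin m × Fin m', z p ^ 2)) := by
            gcongr
            exact mink _ _ _
      _ ≤ Real.sqrt (g' P) + 2 * ε := by rw [sumx]; linarith
  -- commute sqrt with iInf
  have mono : Monotone Real.sqrt := fun a b h => Real.sqrt_le_sqrt h
  have e1 : Real.sqrt (⨅ P, g P) = ⨅ P, Real.sqrt (g P) :=
    Monotone.map_ciInf_of_continuousAt (Real.continuous_sqrt.continuousAt) mono bdd
  have e2 : Real.sqrt (⨅ P, g' P) = ⨅ P, Real.sqrt (g' P) :=
    Monotone.map_ciInf_of_continuousAt (Real.continuous_sqrt.continuousAt) mono bdd'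
  have bdds : BddBelow (Set.range fun P => Real.sqrt (g P)) :=
    ⟨0, by rintro _ ⟨P, rfl⟩; exact Real.sqrt_nonneg _⟩
  show Real.sqrt (⨅ P, g P) ≤ Real.sqrt (⨅ P, g' P) + 2 * ε
  rw [e1, e2, ← sub_le_iff_le_add]
  apply le_ciInf
  intro P
  have h1 : (⨅ P, Real.sqrt (g P)) ≤ Real.sqrt (g P) := ciInf_le bdds P
  linarith [point P]

/-- Uniform perturbation corollary: if every per-sample perturbation magnitude is at most ε,
then AvgWD changes by at most 2ε. -/
theorem avgWD_uniform_perturbation (d K : ℕ) (hd : 1 ≤ d) (hK : 2 ≤ K)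
    (m : Fin K → ℕ) (hm : ∀ i, 1 ≤ m i)
    (Z Z' : ∀ i, Fin (m i) → EuclideanSpace ℝ (Fin d))
    (ε : ℝ) (hε : 0 ≤ ε)
    (hbound : ∀ i, frobDiff (Z i) (Z' i) / Real.sqrt (m i) ≤ ε) :
    |AvgWD Z - AvgWD Z'| ≤ 2 * ε := by
  unfold AvgWD
  have hK2 : (2:ℝ) ≤ (K:ℝ) := by exact_mod_cast hK
  have hKK : (0:ℝ) < (K:ℝ) * ((K:ℝ) - 1) := by nlinarith
  have frobsym : ∀ i, frobDiff (Z' i) (Z i) = frobDiff (Z i) (Z' i) := by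
    intro i
    unfold frobDiff
    congr 1
    exact Finset.sum_congr rfl fun t _ => by rw [norm_sub_rev]
  have pair : ∀ i j : Fin K, |W2 (Z i) (Z j) - W2 (Z' i) (Z' j)| ≤ 2 * ε := by
    intro i j
    have s1 : W2 (Z i) (Z j) ≤ W2 (Z' i) (Z' j) + 2 * ε :=
      W2_perturb_le (hm i) (hm j) _ _ _ _ ε (hbound i) (hbound j)
    have s2 : W2 (Z' i) (Z' j) ≤ W2 (Z i) (Z j) + 2 * ε := by
      refine W2_perturb_le (hm i) (hm j) _ _ _ _ ε ?_ ?_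
      · rw [frobsym i]; exact hbound i
      · rw [frobsym j]; exact hbound j
    rw [abs_sub_le_iff]; constructor <;> linarith
  set c : ℝ := 2 / ((K:ℝ) * ((K:ℝ) - 1)) with hc
  have hc0 : 0 ≤ c := by positivity
  set F : Fin K → Finset (Fin K) := fun i => Finset.univ.filter (fun j => i < j) with hF
  rw [← mul_sub, ← Finset.sum_sub_distrib]
  have inner : ∀ i ∈ Finset.univ,
      (∑ j ∈ F i, W2 (Z i) (Z j)) - ∑ j ∈ F i, W2 (Z' i) (Z' j)
        = ∑ j ∈ F i, (W2 (Z i) (Z j) - W2 (Z' i) (Z' j)) :=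
    fun i _ => by rw [Finset.sum_sub_distrib]
  rw [Finset.sum_congr rfl inner, abs_mul, abs_of_nonneg hc0]
  -- count the pairs
  set N : ℕ := ∑ i : Fin K, (F i).card with hNdef
  have hcard : ∀ i : Fin K, (F i).card = K - 1 - i.val := by
    intro i
    rw [show F i = Finset.Ioi i from by ext j; simp [hF], Fin.card_Ioi]
  have hN : 2 * N = K * (K - 1) := by
    rw [hNdef, Finset.sum_congr rfl fun i _ => hcard i]
    rw [Fin.sum_univ_eq_sum_range (fun j => K - 1 - j) K]
    rw [Finset.sum_range_reflect (fun j => j) K]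
    rw [mul_comm]
    exact Finset.sum_range_id_mul_two K
  have h2N : 2 * (N:ℝ) = (K:ℝ) * ((K:ℝ) - 1) := by
    have h1 : (1:ℕ) ≤ K := le_trans one_le_two hK
    have := congrArg (fun n : ℕ => (n : ℝ)) hN
    push_cast [Nat.cast_sub h1] at this
    convert this using 2 <;> push_cast <;> ring
  have hsum : |∑ i : Fin K, ∑ j ∈ F i, (W2 (Z i) (Z j) - W2 (Z' i) (Z' j))|
      ≤ (N:ℝ) * (2 * ε) := by
    calc |∑ i : Fin K, ∑ j ∈ F i, (W2 (Z i) (Z j) - W2 (Z' i) (Z' j))|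
        ≤ ∑ i : Fin K, |∑ j ∈ F i, (W2 (Z i) (Z j) - W2 (Z' i) (Z' j))| :=
          Finset.abs_sum_le_sum_abs _ _
      _ ≤ ∑ i : Fin K, ∑ j ∈ F i, |W2 (Z i) (Z j) - W2 (Z' i) (Z' j)| :=
          Finset.sum_le_sum fun i _ => Finset.abs_sum_le_sum_abs _ _
      _ ≤ ∑ i : Fin K, ∑ j ∈ F i, (2 * ε) :=
          Finset.sum_le_sum fun i _ => Finset.sum_le_sum fun j _ => pair i j
      _ = (N:ℝ) * (2 * ε) := by
          simp only [Finset.sum_const, nsmul_eq_mul, hNdef]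
          rw [← Finset.sum_mul]
          push_cast
          ring
  calc c * |∑ i : Fin K, ∑ j ∈ F i, (W2 (Z i) (Z j) - W2 (Z' i) (Z' j))|
      ≤ c * ((N:ℝ) * (2 * ε)) := by
        exact mul_le_mul_of_nonneg_left hsum hc0
    _ = 2 * ε := by
        rw [hc, div_mul_eq_mul_div, div_eq_iff hKK.ne']
        linear_combination 2 * ε * h2N
end
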